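/- Let G be a subgroup of O(n), 𝔩 := {A : A skew-symmetric real n×n matrix with exp(tA) ∈ G for all t ∈ ℝ}, Ω₀ := {z ∈ ℝ^{2n} : ⟨z, Jρ(A)z⟩ = 0 for all A ∈ 𝔩}, and let H : ℝ^{2n} → ℝ be differentiable and G-invariant (H∘ρ(g) = H for all g ∈ G). Then for every z ∈ Ω₀ the subspaces V₁ := ℝ·∇H(z) + J𝔤z and V₂ := ℝ·J∇H(z) + 𝔤z of ℝ^{2n} are Euclidean-orthogonal: ⟨v₁, v₂⟩ = 0 for all v₁ ∈ V₁ and v₂ ∈ V₂, where 𝔤z := span{ρ(A)z : A ∈ 𝔩}. -/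

import Mathlib

open scoped RealInnerProductSpace Matrix

noncomputable section

/-- Phase space `ℝ^{2n} = ℝⁿ × ℝⁿ`. -/
abbrev Vn (n : ℕ) := EuclideanSpace ℝ (Fin n ⊕ Fin n)

/-- The standard symplectic matrix `J = [[0, I], [-I, 0]]`. -/
def JM (n : ℕ) : Matrix (Fin n ⊕ Fin n) (Fin n ⊕ Fin n) ℝ :=
  Matrix.fromBlocks 0 1 (-1) 0

/-- The lifted (block diagonal) action `ρ(A) = diag(A, A)` of an `n × n` matrix. -/
def rhoM {n : ℕ} (A : Matrix (Fin n) (Fin n) ℝ) :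
    Matrix (Fin n ⊕ Fin n) (Fin n ⊕ Fin n) ℝ :=
  Matrix.fromBlocks A 0 0 A

/-- Action of a `2n × 2n` matrix on phase space. -/
def act {n : ℕ} (M : Matrix (Fin n ⊕ Fin n) (Fin n ⊕ Fin n) ℝ) : Vn n →ₗ[ℝ] Vn n :=
  Matrix.toEuclideanLin M

/-- The Lie algebra `𝔩` of `G`. -/
def lieAlg {n : ℕ} (G : Set (Matrix (Fin n) (Fin n) ℝ)) : Set (Matrix (Fin n) (Fin n) ℝ) :=
  {A | Aᵀ = -A ∧ ∀ t : ℝ, NormedSpace.exp (t • A) ∈ G}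

/-- The zero level `Ω₀` of the momentum map. -/
def Omega0 {n : ℕ} (G : Set (Matrix (Fin n) (Fin n) ℝ)) : Set (Vn n) :=
  {z | ∀ A ∈ lieAlg G, ⟪z, act (JM n) (act (rhoM A) z)⟫ = 0}

/-- The infinitesimal orbit directions `𝔤z = span {ρ(A)z : A ∈ 𝔩}`. -/
def gSp {n : ℕ} (G : Set (Matrix (Fin n) (Fin n) ℝ)) (z : Vn n) : Submodule ℝ (Vn n) :=
  Submodule.span ℝ {v | ∃ A ∈ lieAlg G, v = act (rhoM A) z}


/-! The four pairings of generators vanish. `⟪∇H, J∇H⟫ = 0` as `J` is skew, and `⟪∇H, ρ(A)z⟫ = 0`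
is the derivative at `0` of `t ↦ H (ρ(exp tA) z)`, which is constant by invariance; as `J` is
orthogonal this also gives `⟪Jρ(A)z, J∇H⟫ = 0`. Finally `⟪Jρ(A)z, ρ(B)z⟫ = μ(AB)` for the linear
form `μ(M) = ⟪z, Jρ(M)z⟫`, which vanishes on `𝔩` because `z ∈ Ω₀`. Transposition gives
`μ(BA) = -μ(AB)`, while `𝔩` is stable under conjugation by `exp(tB)`, so differentiating
`μ(exp(tB) A exp(-tB)) = 0` at `t = 0` gives `μ(BA - AB) = 0`. Hence `μ(AB) = 0`. -/

open NormedSpace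

section Calculus

variable {𝕜 E F : Type*} [NontriviallyNormedField 𝕜] [NormedAddCommGroup E] [NormedSpace 𝕜 E]
  [NormedAddCommGroup F] [NormedSpace 𝕜 F]

theorem HasFDerivAt.apply_eq_zero_of_comp_eq_const {f : E → F} {f' : E →L[𝕜] F} {x v : E}
    {γ : 𝕜 → E} {t₀ : 𝕜} (hf : HasFDerivAt f f' x) (hγ : HasDerivAt γ v t₀) (hγx : γ t₀ = x)
    (hc : ∀ t, f (γ t) = f x) : f' v = 0 := by
  subst hγx
  have h := hf.comp_hasDerivAt t₀ hγ
  rw [show f ∘ γ = fun _ => f (γ t₀) from funext hc] at h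
  exact h.unique (hasDerivAt_const t₀ _)

end Calculus

section Exponential

variable {𝕂 𝔸 : Type*} [RCLike 𝕂] [NormedRing 𝔸] [NormedAlgebra 𝕂 𝔸] [CompleteSpace 𝔸]

theorem hasDerivAt_exp_smul_const_zero (A : 𝔸) :
    HasDerivAt (fun t : 𝕂 => exp (t • A)) A 0 := by
  simpa using hasDerivAt_exp_smul_const (𝕂 := 𝕂) A 0

theorem hasDerivAt_exp_smul_mul_mul_exp_neg_smul (A B : 𝔸) :
    HasDerivAt (fun t : 𝕂 => exp (t • B) * A * exp (-t • B)) (B * A - A * B) 0 := by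
  have hnegB : HasDerivAt (fun t : 𝕂 => exp (-t • B)) (-B) 0 := by
    simpa [neg_smul, ← smul_neg] using hasDerivAt_exp_smul_const_zero (𝕂 := 𝕂) (-B)
  convert ((hasDerivAt_exp_smul_const_zero B).mul_const A).mul hnegB using 1 <;>
    simp [sub_eq_add_neg, Pi.mul_def]

end Exponential

variable {n : ℕ}

section PhaseSpace

lemma act_mul (M N : Matrix (Fin n ⊕ Fin n) (Fin n ⊕ Fin n) ℝ) (x : Vn n) :
    act (M * N) x = act M (act N x) := by
  simp [act]

lemma act_one (x : Vn n) : act 1 x = x := by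
  simp [act]

lemma act_neg (M : Matrix (Fin n ⊕ Fin n) (Fin n ⊕ Fin n) ℝ) (x : Vn n) :
    act (-M) x = -act M x := by
  simp [act]

lemma inner_act_left (M : Matrix (Fin n ⊕ Fin n) (Fin n ⊕ Fin n) ℝ) (x y : Vn n) :
    ⟪act M x, y⟫ = ⟪x, act Mᵀ y⟫ := by
  rw [act, act, ← Matrix.conjTranspose_eq_transpose_of_trivial,
    Matrix.toEuclideanLin_conjTranspose_eq_adjoint, LinearMap.adjoint_inner_right]

lemma inner_act_transpose_self (M : Matrix (Fin n ⊕ Fin n) (Fin n ⊕ Fin n) ℝ) (x : Vn n) :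
    ⟪x, act Mᵀ x⟫ = ⟪x, act M x⟫ := by
  rw [← inner_act_left, real_inner_comm]

lemma JM_transpose : (JM n)ᵀ = -JM n := by
  ext (i | i) (j | j) <;> simp [JM, Matrix.one_apply, eq_comm]

lemma JM_mul_JM : JM n * JM n = -1 := by
  ext (i | i) (j | j) <;> simp [JM, Matrix.fromBlocks_multiply, Matrix.one_apply]

lemma rhoM_one : rhoM (1 : Matrix (Fin n) (Fin n) ℝ) = 1 := by
  simp [rhoM, Matrix.fromBlocks_one]

lemma rhoM_add (A B : Matrix (Fin n) (Fin n) ℝ) : rhoM (A + B) = rhoM A + rhoM B := by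
  simp [rhoM, Matrix.fromBlocks_add]

lemma rhoM_smul (c : ℝ) (A : Matrix (Fin n) (Fin n) ℝ) : rhoM (c • A) = c • rhoM A := by
  simp [rhoM, Matrix.fromBlocks_smul]

lemma rhoM_neg (A : Matrix (Fin n) (Fin n) ℝ) : rhoM (-A) = -rhoM A := by
  simp [rhoM, Matrix.fromBlocks_neg]

lemma rhoM_mul (A B : Matrix (Fin n) (Fin n) ℝ) : rhoM (A * B) = rhoM A * rhoM B := by
  simp [rhoM, Matrix.fromBlocks_multiply]

lemma rhoM_transpose (A : Matrix (Fin n) (Fin n) ℝ) : rhoM Aᵀ = (rhoM A)ᵀ := by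
  simp [rhoM, Matrix.fromBlocks_transpose]

lemma rhoM_mul_JM (A : Matrix (Fin n) (Fin n) ℝ) : rhoM A * JM n = JM n * rhoM A := by
  simp [rhoM, JM, Matrix.fromBlocks_multiply]

lemma inner_self_act_JM (x : Vn n) : ⟪x, act (JM n) x⟫ = 0 := by
  have h := inner_act_transpose_self (JM n) x
  rw [JM_transpose, act_neg, inner_neg_right] at h
  linarith

lemma inner_act_JM_act_JM (x y : Vn n) : ⟪act (JM n) x, act (JM n) y⟫ = ⟪x, y⟫ := by
  rw [inner_act_left, ← act_mul, JM_transpose, neg_mul, JM_mul_JM, neg_neg, act_one]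

end PhaseSpace

section LieAlgebra

-- Any algebra norm on matrices would do: it is only needed to differentiate `exp`.
attribute [local instance] Matrix.linftyOpNormedRing Matrix.linftyOpNormedAlgebra

variable {G : Set (Matrix (Fin n) (Fin n) ℝ)}

lemma mul_mul_inv_mem_lieAlg (hGmul : ∀ g ∈ G, ∀ g' ∈ G, g * g' ∈ G)
    {A U : Matrix (Fin n) (Fin n) ℝ} (hA : A ∈ lieAlg G) (hU : IsUnit U) (hUG : U ∈ G)
    (hUG' : U⁻¹ ∈ G) (hUt : Uᵀ = U⁻¹) : U * A * U⁻¹ ∈ lieAlg G := by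
  refine ⟨?_, fun t => ?_⟩
  · rw [Matrix.transpose_mul, Matrix.transpose_mul, Matrix.transpose_nonsing_inv, hUt, hA.1,
      Matrix.nonsing_inv_nonsing_inv _ ((Matrix.isUnit_iff_isUnit_det U).mp hU)]
    simp only [mul_neg, neg_mul, mul_assoc]
  · rw [← smul_mul_assoc, ← mul_smul_comm, Matrix.exp_conj _ _ hU]
    exact hGmul _ (hGmul _ hUG _ (hA.2 t)) _ hUG'

lemma exp_smul_mul_mul_exp_neg_smul_mem_lieAlg (hGmul : ∀ g ∈ G, ∀ g' ∈ G, g * g' ∈ G)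
    {A B : Matrix (Fin n) (Fin n) ℝ} (hA : A ∈ lieAlg G) (hB : B ∈ lieAlg G) (t : ℝ) :
    exp (t • B) * A * exp (-t • B) ∈ lieAlg G := by
  have hinv : exp (-t • B) = (exp (t • B))⁻¹ := by rw [neg_smul, Matrix.exp_neg]
  rw [hinv]
  refine mul_mul_inv_mem_lieAlg hGmul hA (Matrix.isUnit_exp _) (hB.2 t) (hinv ▸ hB.2 (-t)) ?_
  rw [← Matrix.exp_transpose, Matrix.transpose_smul, hB.1, smul_neg, ← neg_smul, hinv]

def orbitMap (z : Vn n) : Matrix (Fin n) (Fin n) ℝ →ₗ[ℝ] Vn n where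
  toFun A := act (rhoM A) z
  map_add' A B := by simp [act, rhoM_add]
  map_smul' c A := by simp [act, rhoM_smul]

lemma orbitMap_apply (z : Vn n) (A : Matrix (Fin n) (Fin n) ℝ) : orbitMap z A = act (rhoM A) z :=
  rfl

def momentum (z : Vn n) : Matrix (Fin n) (Fin n) ℝ →ₗ[ℝ] ℝ :=
  (innerₛₗ ℝ z).comp ((act (JM n)).comp (orbitMap z))

lemma momentum_transpose (z : Vn n) (M : Matrix (Fin n) (Fin n) ℝ) :
    momentum z Mᵀ = -momentum z M := by
  change ⟪z, act (JM n) (act (rhoM Mᵀ) z)⟫ = -⟪z, act (JM n) (act (rhoM M) z)⟫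
  rw [← act_mul, ← act_mul, rhoM_transpose, ← inner_act_transpose_self, Matrix.transpose_mul,
    Matrix.transpose_transpose, JM_transpose, mul_neg, rhoM_mul_JM, act_neg, inner_neg_right]

lemma momentum_mul_eq_zero (hGmul : ∀ g ∈ G, ∀ g' ∈ G, g * g' ∈ G) {z : Vn n}
    (hz : z ∈ Omega0 G) {A B : Matrix (Fin n) (Fin n) ℝ} (hA : A ∈ lieAlg G)
    (hB : B ∈ lieAlg G) : momentum z (A * B) = 0 := by
  have hcomm : momentum z (B * A - A * B) = 0 :=
    (momentum z).toContinuousLinearMap.hasFDerivAt.apply_eq_zero_of_comp_eq_const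
      (hasDerivAt_exp_smul_mul_mul_exp_neg_smul A B) (by simp) fun t =>
        (hz _ (exp_smul_mul_mul_exp_neg_smul_mem_lieAlg hGmul hA hB t)).trans (hz A hA).symm
  have hswap : momentum z (B * A) = -momentum z (A * B) := by
    rw [← momentum_transpose, Matrix.transpose_mul, hA.1, hB.1, neg_mul_neg]
  rw [map_sub, hswap] at hcomm
  linarith

lemma inner_act_JM_orbit_orbit (hGmul : ∀ g ∈ G, ∀ g' ∈ G, g * g' ∈ G) {z : Vn n}
    (hz : z ∈ Omega0 G) {A B : Matrix (Fin n) (Fin n) ℝ} (hA : A ∈ lieAlg G)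
    (hB : B ∈ lieAlg G) : ⟪act (JM n) (act (rhoM A) z), act (rhoM B) z⟫ = 0 := by
  calc ⟪act (JM n) (act (rhoM A) z), act (rhoM B) z⟫
      = ⟪z, act ((rhoM A)ᵀ * (JM n)ᵀ * rhoM B) z⟫ := by
        rw [inner_act_left, inner_act_left, act_mul, act_mul]
    _ = momentum z (A * B) := by
        rw [← rhoM_transpose, hA.1, rhoM_neg, JM_transpose, neg_mul_neg, rhoM_mul_JM, mul_assoc,
          ← rhoM_mul, act_mul]
        rfl
    _ = 0 := momentum_mul_eq_zero hGmul hz hA hB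

lemma inner_gradient_orbit_eq_zero {H : Vn n → ℝ} {z : Vn n} (hH : DifferentiableAt ℝ H z)
    (hHinv : ∀ g ∈ G, H (act (rhoM g) z) = H z) {A : Matrix (Fin n) (Fin n) ℝ}
    (hA : A ∈ lieAlg G) : ⟪gradient H z, act (rhoM A) z⟫ = 0 := by
  rw [gradient, InnerProductSpace.toDual_symm_apply]
  exact hH.hasFDerivAt.apply_eq_zero_of_comp_eq_const
    ((orbitMap z).toContinuousLinearMap.hasFDerivAt.comp_hasDerivAt 0
      (hasDerivAt_exp_smul_const_zero A))
    (by simp [orbitMap_apply, rhoM_one, act_one]) fun t => hHinv _ (hA.2 t)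

end LieAlgebra

theorem orthogonal_decomposition_at_Omega0_general {n : ℕ}
    (G : Set (Matrix (Fin n) (Fin n) ℝ))
    (hGmul : ∀ g ∈ G, ∀ g' ∈ G, g * g' ∈ G)
    (H : Vn n → ℝ) (hH : Differentiable ℝ H)
    (hHinv : ∀ g ∈ G, ∀ z : Vn n, H (act (rhoM g) z) = H z) :
    ∀ z ∈ Omega0 G,
      ∀ v₁ ∈ Submodule.span ℝ {gradient H z} ⊔ Submodule.map (act (JM n)) (gSp G z),
      ∀ v₂ ∈ Submodule.span ℝ {act (JM n) (gradient H z)} ⊔ gSp G z,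
      ⟪v₁, v₂⟫ = 0 := by
  intro z hz v₁ hv₁ v₂ hv₂
  have hself : Submodule.span ℝ {gradient H z} ⟂ Submodule.span ℝ {act (JM n) (gradient H z)} :=
    Submodule.isOrtho_span.2 <| by
      rintro _ rfl _ rfl
      exact inner_self_act_JM _
  have hgrad : Submodule.span ℝ {gradient H z} ⟂ gSp G z :=
    Submodule.isOrtho_span.2 <| by
      rintro _ rfl _ ⟨A, hA, rfl⟩
      exact inner_gradient_orbit_eq_zero (hH z) (fun g hg => hHinv g hg z) hA
  have hJgrad := hgrad.map ((act (JM n)).isometryOfInner inner_act_JM_act_JM)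
  rw [Submodule.map_span, Set.image_singleton] at hJgrad
  have hJorbit : (gSp G z).map (act (JM n)) ⟂ gSp G z := by
    rw [gSp, Submodule.map_span]
    refine Submodule.isOrtho_span.2 ?_
    rintro _ ⟨_, ⟨A, hA, rfl⟩, rfl⟩ _ ⟨B, hB, rfl⟩
    exact inner_act_JM_orbit_orbit hGmul hz hA hB
  exact (Submodule.isOrtho_sup_left.2 ⟨Submodule.isOrtho_sup_right.2 ⟨hself, hgrad⟩,
    Submodule.isOrtho_sup_right.2 ⟨hJgrad.symm, hJorbit⟩⟩).inner_eq hv₁ hv₂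

theorem orthogonal_decomposition_at_Omega0 {n : ℕ}
    (G : Set (Matrix (Fin n) (Fin n) ℝ))
    (hGO : ∀ g ∈ G, g ∈ Matrix.orthogonalGroup (Fin n) ℝ)
    (hG1 : (1 : Matrix (Fin n) (Fin n) ℝ) ∈ G)
    (hGmul : ∀ g ∈ G, ∀ g' ∈ G, g * g' ∈ G)
    (hGinv : ∀ g ∈ G, g⁻¹ ∈ G)
    (H : Vn n → ℝ) (hH : Differentiable ℝ H)
    (hHinv : ∀ g ∈ G, ∀ z : Vn n, H (act (rhoM g) z) = H z) :
    ∀ z ∈ Omega0 G,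
      ∀ v₁ ∈ Submodule.span ℝ {gradient H z} ⊔ Submodule.map (act (JM n)) (gSp G z),
      ∀ v₂ ∈ Submodule.span ℝ {act (JM n) (gradient H z)} ⊔ gSp G z,
      ⟪v₁, v₂⟫ = 0 :=
  orthogonal_decomposition_at_Omega0_general G hGmul H hH hHinv
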